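/- arXiv:1712.02045 — 2 statements merged into one kernel-verified Lean document; each statement's English description precedes it below -/
import Mathlib

section
/- Suppose the diameter of L is n. If H is a sub-hypergraph of L with H ≠ L and k ≥ n, then Int^k(H) = ∅. -/
open Set

variable {V : Type*} [DecidableEq V]

/-- An abstract simplicial complex: simplices are nonempty finite sets,
closed under nonempty subsets. -/
def IsComplex (L : Set (Finset V)) : Prop :=
  (∀ σ ∈ L, σ.Nonempty) ∧ ∀ σ ∈ L, ∀ τ : Finset V, τ ⊆ σ → τ.Nonempty → τ ∈ L

/-- ΔH : the minimal complex containing H (downward closure inside L). -/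
def dUp (L H : Set (Finset V)) : Set (Finset V) :=
  {σ | σ ∈ L ∧ ∃ τ ∈ H, σ ⊆ τ}

/-- δH : the maximal complex contained in H. -/
def dDown (L H : Set (Finset V)) : Set (Finset V) :=
  {σ | σ ∈ L ∧ ∀ τ : Finset V, τ ⊆ σ → τ.Nonempty → τ ∈ H}

/-- γH : the complement hypergraph in L. -/
def gam (L H : Set (Finset V)) : Set (Finset V) := L \ H

/-- Ext = Δγδγ. -/
def ExtOp (L : Set (Finset V)) (H : Set (Finset V)) : Set (Finset V) :=
  dUp L (gam L (dDown L (gam L H)))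

/-- Int = δγΔγ. -/
def IntOp (L : Set (Finset V)) (H : Set (Finset V)) : Set (Finset V) :=
  dDown L (gam L (dUp L (gam L H)))

/-- A path in L: a nonempty sequence of simplices of L in which
consecutive simplices intersect. -/
def IsPath (L : Set (Finset V)) (s : List (Finset V)) : Prop :=
  s ≠ [] ∧ (∀ σ ∈ s, σ ∈ L) ∧ s.Chain' (fun a b => (a ∩ b).Nonempty)

/-- The distance between two simplices: the minimal length of a path
from σ to σ'. -/
noncomputable def pathDist (L : Set (Finset V)) (σ σ' : Finset V) : ℕ :=
  sInf {m | ∃ s : List (Finset V),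
    IsPath L s ∧ s.head? = some σ ∧ s.getLast? = some σ' ∧ s.length = m}

/-- The diameter of L. -/
noncomputable def diam (L : Set (Finset V)) : ℕ :=
  sSup {m | ∃ σ ∈ L, ∃ σ' ∈ L, pathDist L σ σ' = m}

/-- L is connected: any two simplices are joined by a path. -/
def IsConn (L : Set (Finset V)) : Prop :=
  ∀ σ ∈ L, ∀ σ' ∈ L, ∃ s : List (Finset V),
    IsPath L s ∧ s.head? = some σ ∧ s.getLast? = some σ'

/-! Every simplex of `L` meeting a simplex σ of `Int H` lies in `H`: otherwise their common
face would lie in `Δ γ H`, against σ ∈ `δ γ Δ γ H`. Iterating, every simplex at path length at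
most `k + 1` from a simplex of `Int^k H` lies in `H`. A simplex of `Int^k H` with `k ≥ diam L`
would therefore force every simplex of the connected complex `L` into `H`. -/

section IntOp

variable {L H : Set (Finset V)}

theorem mem_of_inter_nonempty_of_mem_IntOp {σ ρ : Finset V} (hσ : σ ∈ IntOp L H) (hρ : ρ ∈ L)
    (hρσ : (ρ ∩ σ).Nonempty) : ρ ∈ H := by
  by_contra hρH
  have hface := hσ.2 (ρ ∩ σ) Finset.inter_subset_right hρσ
  exact hface.2 ⟨hface.1, ρ, ⟨hρ, hρH⟩, Finset.inter_subset_left⟩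

theorem IntOp_subset_self (hL : ∀ σ ∈ L, σ.Nonempty) : IntOp L H ⊆ H := fun σ hσ =>
  mem_of_inter_nonempty_of_mem_IntOp hσ hσ.1 (by simpa using hL σ hσ.1)

theorem iterate_IntOp_subset_self (hL : ∀ σ ∈ L, σ.Nonempty) (k : ℕ) :
    (IntOp L)^[k] H ⊆ H := by
  induction k with
  | zero => exact subset_rfl
  | succ k ih =>
    rw [Function.iterate_succ_apply']
    exact (IntOp_subset_self hL).trans ih

theorem IsPath.tail {a b : Finset V} {t : List (Finset V)}
    (h : IsPath L (a :: b :: t)) : IsPath L (b :: t) :=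
  ⟨List.cons_ne_nil b t, fun ρ hρ => h.2.1 ρ (List.mem_cons_of_mem a hρ),
    (List.isChain_cons_cons.mp h.2.2).2⟩

theorem mem_of_isPath_of_mem_iterate_IntOp (hL : ∀ σ ∈ L, σ.Nonempty) {s : List (Finset V)}
    (hs : IsPath L s) {k : ℕ} {σ x : Finset V}
    (hσ : σ ∈ (IntOp L)^[k] H) (hhead : s.head? = some σ) (hlast : s.getLast? = some x)
    (hlen : s.length ≤ k + 1) : x ∈ H := by
  induction s generalizing k σ with
  | nil => exact absurd rfl hs.1
  | cons a t ih =>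
    obtain rfl : a = σ := by simpa using hhead
    cases t with
    | nil =>
      obtain rfl : a = x := by simpa using hlast
      exact iterate_IntOp_subset_self hL k hσ
    | cons b t =>
      obtain ⟨k, rfl⟩ : ∃ k', k = k' + 1 :=
        Nat.exists_eq_add_one.mpr (by simp only [List.length_cons] at hlen; omega)
      rw [Function.iterate_succ_apply'] at hσ
      have hb : b ∈ (IntOp L)^[k] H :=
        mem_of_inter_nonempty_of_mem_IntOp hσ (hs.2.1 b (by simp))
          (Finset.inter_comm a b ▸ (List.isChain_cons_cons.mp hs.2.2).1)
      exact ih hs.tail hb rfl (by rwa [List.getLast?_cons_cons] at hlast)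
        (by simp only [List.length_cons] at hlen ⊢; omega)

theorem exists_isPath_length_eq_pathDist (hconn : IsConn L)
    {σ σ' : Finset V} (hσ : σ ∈ L) (hσ' : σ' ∈ L) :
    ∃ s : List (Finset V), IsPath L s ∧ s.head? = some σ ∧ s.getLast? = some σ' ∧
      s.length = pathDist L σ σ' := by
  obtain ⟨s, hs, hhead, hlast⟩ := hconn σ hσ σ' hσ'
  exact Nat.sInf_mem (s := {m | ∃ s : List (Finset V), IsPath L s ∧ s.head? = some σ ∧
    s.getLast? = some σ' ∧ s.length = m}) ⟨s.length, s, hs, hhead, hlast, rfl⟩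

theorem pathDist_le_diam (hfin : L.Finite) {σ σ' : Finset V}
    (hσ : σ ∈ L) (hσ' : σ' ∈ L) : pathDist L σ σ' ≤ diam L := by
  refine le_csSup ?_ ⟨σ, hσ, σ', hσ', rfl⟩
  refine ((hfin.prod hfin).image fun p => pathDist L p.1 p.2).bddAbove.mono ?_
  rintro m ⟨a, ha, b, hb, rfl⟩
  exact ⟨(a, b), ⟨ha, hb⟩, rfl⟩

end IntOp

theorem int_iterate_eq_empty (L : Set (Finset V)) (hfin : L.Finite) (hL : IsComplex L)
    (hconn : IsConn L) (n : ℕ) (hdiam : diam L = n)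
    (H : Set (Finset V)) (hH : H ⊆ L) (hne : H ≠ L)
    (k : ℕ) (hk : n ≤ k) :
    (IntOp L)^[k] H = ∅ := by
  refine Set.eq_empty_of_forall_notMem fun σ hσ => ?_
  have hσL : σ ∈ L := hH (iterate_IntOp_subset_self hL.1 k hσ)
  obtain ⟨ρ, hρL, hρH⟩ := Set.exists_of_ssubset (hH.ssubset_of_ne hne)
  obtain ⟨s, hs, hhead, hlast, hlen⟩ := exists_isPath_length_eq_pathDist hconn hσL hρL
  have hdist := pathDist_le_diam hfin hσL hρL
  exact hρH (mem_of_isPath_of_mem_iterate_IntOp hL.1 hs hσ hhead hlast (by omega))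
end

section
/- For every sub-hypergraph H of L, Ext(H) ⊆ Nbd(H); and if every vertex of a hyperedge of H is itself a hyperedge of H (i.e., {v} ∈ H for all v ∈ ∪H), then Ext(H) = Nbd(H). -/
/-!
A simplex of `γδγH` is one having a nonempty face in `H`, so it meets a hyperedge of `H`, and
`Nbd(H)` is exactly `Δ` of the simplices meeting `H`. Conversely, when all vertices of hyperedges
of `H` lie in `H`, a simplex meeting `H` in a vertex `v` has the face `{v} ∈ H`.
-/

open Set

variable {V : Type*} [DecidableEq V]

/-- The neighborhood of a simplex τ in L. -/
def Nbd (L : Set (Finset V)) (τ : Finset V) : Set (Finset V) :=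
  dUp L {σ | σ ∈ L ∧ (σ ∩ τ).Nonempty}

/-- The neighborhood of a hypergraph H in L. -/
def NbdH (L H : Set (Finset V)) : Set (Finset V) := ⋃ τ ∈ H, Nbd L τ

/-- Nbd⁻¹(H) : the union of all sub-hypergraphs of L whose
neighborhood is contained in H. -/
def NbdInv (L H : Set (Finset V)) : Set (Finset V) :=
  ⋃₀ {H' | H' ⊆ L ∧ NbdH L H' ⊆ H}

def meeting (L H : Set (Finset V)) : Set (Finset V) :=
  {σ | σ ∈ L ∧ ∃ τ ∈ H, (σ ∩ τ).Nonempty}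

theorem NbdH_eq_dUp_meeting (L H : Set (Finset V)) : NbdH L H = dUp L (meeting L H) := by
  ext σ
  simp only [NbdH, Nbd, dUp, meeting, mem_iUnion, mem_ofPred_eq]
  constructor
  · rintro ⟨τ, hτH, hσL, σ', ⟨hσ'L, hmeet⟩, hσσ'⟩
    exact ⟨hσL, σ', ⟨hσ'L, τ, hτH, hmeet⟩, hσσ'⟩
  · rintro ⟨hσL, σ', ⟨hσ'L, τ, hτH, hmeet⟩, hσσ'⟩
    exact ⟨τ, hτH, hσL, σ', ⟨hσ'L, hmeet⟩, hσσ'⟩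

theorem gam_dDown_gam_subset_meeting {L : Set (Finset V)} (hL : IsComplex L)
    (H : Set (Finset V)) : gam L (dDown L (gam L H)) ⊆ meeting L H := by
  rintro σ ⟨hσL, hσ⟩
  simp only [dDown, gam, mem_ofPred_eq, not_and, not_forall] at hσ
  obtain ⟨ρ, hρσ, hρne, hρ⟩ := hσ hσL
  have hρH : ρ ∈ H := by
    by_contra hρH
    exact hρ ⟨hL.2 σ hσL ρ hρσ hρne, hρH⟩
  obtain ⟨v, hv⟩ := hρne
  exact ⟨hσL, ρ, hρH, v, Finset.mem_inter.mpr ⟨hρσ hv, hv⟩⟩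

theorem meeting_subset_gam_dDown_gam {L H : Set (Finset V)}
    (hvert : ∀ σ ∈ H, ∀ v ∈ σ, ({v} : Finset V) ∈ H) :
    meeting L H ⊆ gam L (dDown L (gam L H)) := by
  rintro σ ⟨hσL, τ, hτH, v, hv⟩
  rw [Finset.mem_inter] at hv
  refine ⟨hσL, fun hσ => ?_⟩
  have hv_gam : ({v} : Finset V) ∈ gam L H :=
    hσ.2 {v} (Finset.singleton_subset_iff.mpr hv.1) (Finset.singleton_nonempty v)
  exact hv_gam.2 (hvert τ hτH v hv.2)

theorem ext_subset_nbd_general (L : Set (Finset V)) (hL : IsComplex L)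
    (H : Set (Finset V)) :
    ExtOp L H ⊆ NbdH L H ∧
      ((∀ σ ∈ H, ∀ v ∈ σ, ({v} : Finset V) ∈ H) → ExtOp L H = NbdH L H) := by
  rw [NbdH_eq_dUp_meeting]
  have dUp_mono {A B : Set (Finset V)} (h : A ⊆ B) : dUp L A ⊆ dUp L B :=
    fun _ ⟨hσL, τ, hτ, hστ⟩ => ⟨hσL, τ, h hτ, hστ⟩
  have hsub : ExtOp L H ⊆ dUp L (meeting L H) := dUp_mono (gam_dDown_gam_subset_meeting hL H)
  exact ⟨hsub, fun hvert => hsub.antisymm (dUp_mono (meeting_subset_gam_dDown_gam hvert))⟩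

theorem ext_subset_nbd (L : Set (Finset V)) (hfin : L.Finite) (hL : IsComplex L)
    (H : Set (Finset V)) (hH : H ⊆ L) :
    ExtOp L H ⊆ NbdH L H ∧
      ((∀ σ ∈ H, ∀ v ∈ σ, ({v} : Finset V) ∈ H) → ExtOp L H = NbdH L H) :=
  ext_subset_nbd_general L hL H
end
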